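/- The generalized functions η₁ and η₂ are fixed by H = SO(1,1): fix λ ∈ ℝ and define η₁(x) = π^{−1/2}·(1−x²)^{−(1−iλ)/2} for |x| < 1 and η₂(x) = π^{−1/2}·(x²−1)^{−(1−iλ)/2} for |x| > 1 (principal complex powers of the positive real bases). Then for every t ∈ ℝ: (i) for every x with |x| < 1 one has cosh(t) − x·sinh(t) > 0, the point y = (x·cosh(t) − sinh(t))/(cosh(t) − x·sinh(t)) satisfies |y| < 1, and |cosh(t) − x·sinh(t)|^{−1+iλ} · η₁(y) = η₁(x); (ii) for every x with |x| > 1 and cosh(t) − x·sinh(t) ≠ 0, the point y = (x·cosh(t) − sinh(t))/(cosh(t) − x·sinh(t)) satisfies |y| > 1 and |cosh(t) − x·sinh(t)|^{−1+iλ} · η₂(y) = η₂(x). -/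

import Mathlib

open Real

/-- `η₁(x) = π^{-1/2}(1-x²)^{-(1-iλ)/2}` (meaningful for `|x| < 1`). -/
noncomputable def eta1 (lam : ℝ) (x : ℝ) : ℂ :=
  ((π ^ (-(1 / 2 : ℝ)) : ℝ) : ℂ) *
    ((1 - x ^ 2 : ℝ) : ℂ) ^ (-((1 : ℂ) - Complex.I * lam) / 2)

/-- `η₂(x) = π^{-1/2}(x²-1)^{-(1-iλ)/2}` (meaningful for `|x| > 1`). -/
noncomputable def eta2 (lam : ℝ) (x : ℝ) : ℂ :=
  ((π ^ (-(1 / 2 : ℝ)) : ℝ) : ℂ) *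
    ((x ^ 2 - 1 : ℝ) : ℂ) ^ (-((1 : ℂ) - Complex.I * lam) / 2)

/-!
The Möbius map `x ↦ (x c - s)/(c - x s)` of a matrix with `c² - s² = 1` multiplies `1 - x²` by
`(c - x s)⁻²`, so it preserves both `|x| < 1` and `|x| > 1`. Since the bases `1 - x²`, `x² - 1` are
nonnegative, the complex power `(·)^α` is multiplicative on them, and the factor
`|c - x s|^{-1+iλ} = (|c - x s|²)^α` with `α = -(1-iλ)/2` cancels `(c - x s)^{-2α}` exactly.
-/

lemma one_sub_sq_moebius {c s x : ℝ} (hcs : c ^ 2 - s ^ 2 = 1) (hd : c - x * s ≠ 0) :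
    1 - ((x * c - s) / (c - x * s)) ^ 2 = (1 - x ^ 2) / (c - x * s) ^ 2 := by
  field_simp
  linear_combination (1 - x ^ 2) * hcs

lemma sq_sub_one_moebius {c s x : ℝ} (hcs : c ^ 2 - s ^ 2 = 1) (hd : c - x * s ≠ 0) :
    ((x * c - s) / (c - x * s)) ^ 2 - 1 = (x ^ 2 - 1) / (c - x * s) ^ 2 := by
  rw [← neg_sub, one_sub_sq_moebius hcs hd, ← neg_div, neg_sub]

lemma cosh_sub_mul_sinh_pos (t : ℝ) {x : ℝ} (hx : |x| < 1) : 0 < cosh t - x * sinh t := by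
  have hs : |sinh t| < cosh t :=
    abs_lt_of_sq_lt_sq (by nlinarith [cosh_sq_sub_sinh_sq t]) (cosh_pos t).le
  nlinarith [le_abs_self (x * sinh t), abs_mul x (sinh t), abs_nonneg (sinh t)]

lemma ofReal_abs_cpow_two_mul (d : ℝ) (α : ℂ) :
    ((|d| : ℝ) : ℂ) ^ (2 * α) = ((d ^ 2 : ℝ) : ℂ) ^ α := by
  rw [show (2 : ℂ) = ((2 : ℝ) : ℂ) by norm_num, Complex.cpow_mul_ofReal_nonneg (abs_nonneg d),
    rpow_two, sq_abs]

lemma ofReal_abs_cpow_two_mul_mul_div_sq (C : ℂ) {a d : ℝ} (ha : 0 ≤ a) (hd : d ≠ 0) (α : ℂ) :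
    ((|d| : ℝ) : ℂ) ^ (2 * α) * (C * ((a / d ^ 2 : ℝ) : ℂ) ^ α) = C * ((a : ℝ) : ℂ) ^ α := by
  have hd2 : 0 < d ^ 2 := by positivity
  have hsplit : ((a : ℝ) : ℂ) ^ α = ((a / d ^ 2 : ℝ) : ℂ) ^ α * ((d ^ 2 : ℝ) : ℂ) ^ α := by
    rw [← Complex.mul_cpow_ofReal_nonneg (div_nonneg ha hd2.le) hd2.le, ← Complex.ofReal_mul, div_mul_cancel₀ a hd2.ne']
  rw [ofReal_abs_cpow_two_mul, hsplit]
  ring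

/-- The generalized functions `η₁` and `η₂` are fixed by `H = SO(1,1)`, acting through the
spherical principal series formula with `h_t⁻¹ = [[cosh t, -sinh t],[-sinh t, cosh t]]`. -/
theorem eta_one_eta_two_H_fixed (lam : ℝ) :
    ∀ t : ℝ,
      (∀ x : ℝ, |x| < 1 →
        0 < Real.cosh t - x * Real.sinh t ∧
        |(x * Real.cosh t - Real.sinh t) / (Real.cosh t - x * Real.sinh t)| < 1 ∧
        ((|Real.cosh t - x * Real.sinh t| : ℝ) : ℂ) ^ ((-1 : ℂ) + Complex.I * lam) *
            eta1 lam ((x * Real.cosh t - Real.sinh t) / (Real.cosh t - x * Real.sinh t)) =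
          eta1 lam x) ∧
      (∀ x : ℝ, 1 < |x| → Real.cosh t - x * Real.sinh t ≠ 0 →
        1 < |(x * Real.cosh t - Real.sinh t) / (Real.cosh t - x * Real.sinh t)| ∧
        ((|Real.cosh t - x * Real.sinh t| : ℝ) : ℂ) ^ ((-1 : ℂ) + Complex.I * lam) *
            eta2 lam ((x * Real.cosh t - Real.sinh t) / (Real.cosh t - x * Real.sinh t)) =
          eta2 lam x) := by
  intro t
  have hcs := cosh_sq_sub_sinh_sq t
  have hexp : (-1 : ℂ) + Complex.I * lam = 2 * (-((1 : ℂ) - Complex.I * lam) / 2) := by ring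
  refine ⟨fun x hx => ?_, fun x hx hd => ?_⟩
  · have hd := cosh_sub_mul_sinh_pos t hx
    have hy := one_sub_sq_moebius hcs hd.ne'
    have hx2 : 0 < 1 - x ^ 2 := sub_pos.2 ((sq_lt_one_iff_abs_lt_one x).2 hx)
    refine ⟨hd, (sq_lt_one_iff_abs_lt_one _).1 (sub_pos.1 ?_), ?_⟩
    · rw [hy]
      positivity
    · rw [eta1, eta1, hy, hexp, ofReal_abs_cpow_two_mul_mul_div_sq _ hx2.le hd.ne']
  · have hy := sq_sub_one_moebius hcs hd
    have hx2 : 0 < x ^ 2 - 1 := sub_pos.2 ((one_lt_sq_iff_one_lt_abs x).2 hx)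
    refine ⟨(one_lt_sq_iff_one_lt_abs _).1 (sub_pos.1 ?_), ?_⟩
    · rw [hy]
      positivity
    · rw [eta2, eta2, hy, hexp, ofReal_abs_cpow_two_mul_mul_div_sq _ hx2.le hd]
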